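/- Let G = G₀(u) ⋄ H(u) be a connected non-odd-bipartite k-uniform hypergraph (k even) with H odd-bipartite. Then λ_min(G) ≤ d_{G₀}(u)/ν(H), where d_{G₀}(u) is the degree of u in G₀ and ν(H) the number of vertices of H. -/

import Mathlib

open Finset

structure UHG (V : Type) [DecidableEq V] [Fintype V] (k : ℕ) where
  edges : Finset (Finset V)
  uniform : ∀ e ∈ edges, e.card = k

namespace UHG

variable {V : Type} [DecidableEq V] [Fintype V] {k : ℕ}

/-- The vertices of the hypergraph: all vertices covered by some edge. -/
def verts (G : UHG V k) : Finset V := G.edges.biUnion id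

/-- The set of edges containing a given vertex. -/
def incEdges (G : UHG V k) (v : V) : Finset (Finset V) :=
  G.edges.filter fun e => v ∈ e

/-- The degree of a vertex. -/
def deg (G : UHG V k) (v : V) : ℕ := (G.incEdges v).card

/-- Two vertices are adjacent if some edge contains both. -/
def Adj (G : UHG V k) (u v : V) : Prop := ∃ e ∈ G.edges, u ∈ e ∧ v ∈ e

/-- A hypergraph is connected if any two of its vertices are joined by a walk. -/
def Connected (G : UHG V k) : Prop :=
  G.verts.Nonempty ∧ ∀ u ∈ G.verts, ∀ v ∈ G.verts, Relation.ReflTransGen G.Adj u v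

/-- A hypergraph is odd-bipartite if there is a set `U` of vertices such that
every edge meets `U` in an odd number of vertices (the bipartition is `{U, V \ U}`). -/
def OddBipartite (G : UHG V k) : Prop :=
  ∃ U : Finset V, ∀ e ∈ G.edges, Odd (e ∩ U).card

/-- The signless Laplacian form `Q(G) x^k = ∑_{e ∈ E} (∑_{v∈e} x_v^k + k ∏_{v∈e} x_v)`. -/
def Qform (G : UHG V k) (x : V → ℝ) : ℝ :=
  ∑ e ∈ G.edges, ((∑ v ∈ e, x v ^ k) + (k : ℝ) * ∏ v ∈ e, x v)

/-- The H-eigenvector equation for the signless Laplacian tensor: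
`(λ - d(v)) x_v^{k-1} = ∑_{e ∋ v} ∏_{w ∈ e \ {v}} x_w` for every vertex `v`. -/
def eigenEq (G : UHG V k) (lam : ℝ) (x : V → ℝ) : Prop :=
  ∀ v : V, (lam - (G.deg v : ℝ)) * x v ^ (k - 1) =
    ∑ e ∈ G.incEdges v, ∏ w ∈ e.erase v, x w

/-- The least H-eigenvalue of the signless Laplacian tensor. -/
noncomputable def lamMin (G : UHG V k) : ℝ :=
  sInf {lam : ℝ | ∃ x : V → ℝ, x ≠ 0 ∧ G.eigenEq lam x}

/-- A first eigenvector: an H-eigenvector associated with the least H-eigenvalue. -/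
def IsFirstEigenvector (G : UHG V k) (x : V → ℝ) : Prop :=
  x ≠ 0 ∧ G.eigenEq G.lamMin x

/-- `G` is the coalescence `G₀(u) ⋄ H(u)`: its edges are the disjoint union of the
edges of `G₀` and `H`, which share only the vertex `u`. -/
def IsCoalescence (G G₀ H : UHG V k) (u : V) : Prop :=
  G.edges = G₀.edges ∪ H.edges ∧ Disjoint G₀.edges H.edges ∧
  G₀.verts ∩ H.verts ⊆ {u} ∧ u ∈ G₀.verts ∧ u ∈ H.verts

end UHG

/-!
Minimising the signless Laplacian form `Q` over the compact unit sphere `∑ x_v^k = 1` (`k` even)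
gives, by Lagrange multipliers, an H-eigenvector whose eigenvalue is the minimum, because the
eigenvalue of an eigenvector `x` is `Q(x) / ∑ x_v^k`. Since all H-eigenvalues are nonnegative,
`λ_min(G)` is therefore at most every Rayleigh quotient `Q(y) / ∑ y_v^k`. For `G₀(u) ⋄ H(u)`, take
`y = ±1` on `H` according to its odd-bipartition and `0` elsewhere: an edge of `H` contributes
`k - k = 0`, an edge of `G₀` through `u` contributes `y_u^k = 1`, and `∑ y_v^k = ν(H)`.
-/

open ContinuousLinearMap

theorem hasStrictFDerivAt_apply_pow {V : Type} [Fintype V] (v : V) (x : V → ℝ) (n : ℕ) :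
    HasStrictFDerivAt (fun y : V → ℝ => y v ^ n)
      ((n * x v ^ (n - 1)) • (proj v : (V → ℝ) →L[ℝ] ℝ)) x := by
  simpa only [nsmul_eq_mul] using (hasStrictFDerivAt_apply (𝕜 := ℝ) v x).pow n

theorem hasStrictFDerivAt_sum_pow {V : Type} [Fintype V] (x : V → ℝ) (n : ℕ) :
    HasStrictFDerivAt (fun y : V → ℝ => ∑ v, y v ^ n)
      (∑ v, (n * x v ^ (n - 1)) • (proj v : (V → ℝ) →L[ℝ] ℝ)) x :=
  .fun_sum fun v _ => hasStrictFDerivAt_apply_pow v x n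

theorem sum_smul_proj_apply_single {V : Type} [Fintype V] [DecidableEq V] (c : V → ℝ) (w : V) :
    (∑ v, c v • proj v : (V → ℝ) →L[ℝ] ℝ) (Pi.single w 1) = c w := by
  simp [Pi.single_apply]

theorem isCompact_sum_pow_eq_one {V : Type} [Fintype V] {n : ℕ} (hn : Even n) (hn0 : n ≠ 0) :
    IsCompact {y : V → ℝ | ∑ v, y v ^ n = 1} := by
  refine Metric.isCompact_of_isClosed_isBounded (isClosed_eq (by fun_prop) continuous_const)
    ((Metric.isBounded_closedBall (x := 0) (r := 1)).subset fun y hy => ?_)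
  rw [Metric.mem_closedBall, dist_zero_right, pi_norm_le_iff_of_nonneg zero_le_one]
  intro v
  rw [Real.norm_eq_abs, ← pow_le_one_iff_of_nonneg (abs_nonneg _) hn0, pow_abs,
    abs_of_nonneg (hn.pow_nonneg _), ← hy.out]
  exact single_le_sum (fun w _ => hn.pow_nonneg (y w)) (mem_univ v)

namespace UHG

variable {V : Type} [DecidableEq V] [Fintype V] {k : ℕ}

theorem sum_incEdges_comm {M : Type*} [AddCommMonoid M] (G : UHG V k) (f : Finset V → V → M) :
    ∑ v, ∑ e ∈ G.incEdges v, f e v = ∑ e ∈ G.edges, ∑ v ∈ e, f e v :=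
  sum_comm' fun v e => by simp [incEdges, and_comm]

theorem nonneg_of_eigenEq (G : UHG V k) {lam : ℝ} {x : V → ℝ} (hx : x ≠ 0)
    (h : G.eigenEq lam x) : 0 ≤ lam := by
  obtain ⟨w, hw⟩ := Function.ne_iff.1 hx
  obtain ⟨v, -, hv⟩ := exists_max_image univ (fun v => |x v|) ⟨w, mem_univ w⟩
  have hM : 0 < |x v| ^ (k - 1) := pow_pos ((abs_pos.2 hw).trans_le (hv w (mem_univ w))) _
  have hbound : |lam - G.deg v| * |x v| ^ (k - 1) ≤ G.deg v * |x v| ^ (k - 1) :=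
    calc |lam - G.deg v| * |x v| ^ (k - 1)
        = |∑ e ∈ G.incEdges v, ∏ w ∈ e.erase v, x w| := by rw [← h v, abs_mul, abs_pow]
      _ ≤ ∑ e ∈ G.incEdges v, ∏ w ∈ e.erase v, |x w| := by
          simpa only [abs_prod] using
            abs_sum_le_sum_abs (fun e : Finset V => ∏ w ∈ e.erase v, x w) _
      _ ≤ ∑ e ∈ G.incEdges v, |x v| ^ (k - 1) := by
          refine sum_le_sum fun e he => ?_
          obtain ⟨heG, hve⟩ := mem_filter.1 he
          calc ∏ w ∈ e.erase v, |x w| ≤ ∏ _w ∈ e.erase v, |x v| :=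
                prod_le_prod (fun _ _ => abs_nonneg _) fun w _ => hv w (mem_univ w)
            _ = |x v| ^ (k - 1) := by rw [prod_const, card_erase_of_mem hve, G.uniform e heG]
      _ = G.deg v * |x v| ^ (k - 1) := by rw [sum_const, nsmul_eq_mul]; rfl
  linarith [(abs_le.1 (le_of_mul_le_mul_right hbound hM)).1]

theorem lamMin_le_of_eigenEq (G : UHG V k) {lam : ℝ} {x : V → ℝ} (hx : x ≠ 0)
    (h : G.eigenEq lam x) : G.lamMin ≤ lam :=
  csInf_le ⟨0, fun _ ⟨_, hy, hy'⟩ => G.nonneg_of_eigenEq hy hy'⟩ ⟨x, hx, h⟩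

theorem eigenEq.mul_sum_pow {G : UHG V k} {lam : ℝ} {x : V → ℝ} (hk0 : 0 < k)
    (h : G.eigenEq lam x) : lam * ∑ v, x v ^ k = G.Qform x := by
  have hv : ∀ v, lam * x v ^ k = ∑ e ∈ G.incEdges v, (x v ^ k + ∏ w ∈ e, x w) := fun v => by
    have := congrArg (· * x v) (h v)
    simp only [sum_mul] at this
    rw [sum_congr rfl fun e (he : e ∈ G.incEdges v) => prod_erase_mul e x (mem_filter.1 he).2]
      at this
    rw [sum_add_distrib, sum_const, ← this, nsmul_eq_mul, mul_assoc, ← pow_succ,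
      Nat.sub_add_cancel hk0]
    unfold deg; ring
  calc lam * ∑ v, x v ^ k = ∑ v, ∑ e ∈ G.incEdges v, (x v ^ k + ∏ w ∈ e, x w) := by
        rw [mul_sum]; exact sum_congr rfl fun v _ => hv v
    _ = G.Qform x := by
        rw [sum_incEdges_comm]
        refine sum_congr rfl fun e he => ?_
        rw [sum_add_distrib, sum_const, G.uniform e he, nsmul_eq_mul]

noncomputable def qformGrad (G : UHG V k) (x : V → ℝ) (v : V) : ℝ :=
  k * (G.deg v * x v ^ (k - 1) + ∑ e ∈ G.incEdges v, ∏ w ∈ e.erase v, x w)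

theorem hasStrictFDerivAt_qform (G : UHG V k) (x : V → ℝ) :
    HasStrictFDerivAt G.Qform (∑ v, G.qformGrad x v • (proj v : (V → ℝ) →L[ℝ] ℝ)) x := by
  have hprod := fun e : Finset V => HasStrictFDerivAt.finsetProd (u := e)
    fun v _ => hasStrictFDerivAt_apply (𝕜 := ℝ) v x
  refine (HasStrictFDerivAt.fun_sum fun e _ =>
    (HasStrictFDerivAt.fun_sum fun v _ => hasStrictFDerivAt_apply_pow v x k).add
      ((hprod e).const_mul (k : ℝ))).congr_fderiv ?_
  ext y
  simp only [qformGrad, deg, _root_.sum_apply, add_apply, smul_apply, proj_apply, smul_eq_mul]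
  calc _ = ∑ e ∈ G.edges, ∑ v ∈ e,
        (k * x v ^ (k - 1) * y v + k * ((∏ w ∈ e.erase v, x w) * y v)) := by
        simp only [sum_add_distrib, mul_sum]
    _ = _ := by
        rw [← sum_incEdges_comm]
        refine sum_congr rfl fun v _ => ?_
        rw [sum_add_distrib, sum_const, nsmul_eq_mul, ← mul_sum, ← sum_mul]
        ring

theorem exists_eigenEq_of_isMinOn (G : UHG V k) (hk0 : 0 < k) {x : V → ℝ}
    (hx : ∑ v, x v ^ k = 1) (hmin : IsMinOn G.Qform {y | ∑ v, y v ^ k = 1} x) :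
    ∃ lam, G.eigenEq lam x := by
  have hextr : IsLocalExtrOn G.Qform {y | ∑ v, y v ^ k = ∑ v, x v ^ k} x := by
    rw [hx]; exact Or.inl hmin.localize
  obtain ⟨a, b, hab, hlagrange⟩ := hextr.exists_multipliers_of_hasStrictFDerivAt_1d
    (hasStrictFDerivAt_sum_pow x k) (G.hasStrictFDerivAt_qform x)
  have hw : ∀ w, a * (k * x w ^ (k - 1)) + b * G.qformGrad x w = 0 := fun w => by
    simpa only [add_apply, smul_apply, sum_smul_proj_apply_single, zero_apply, smul_eq_mul]
      using congrArg (· (Pi.single w 1)) hlagrange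
  have hb : b ≠ 0 := by
    rintro rfl
    have ha : a ≠ 0 := by rintro rfl; exact hab rfl
    have : x = 0 := funext fun w => by
      have hxw := hw w
      simp only [zero_mul, add_zero, mul_eq_zero, ha, Nat.cast_eq_zero, hk0.ne', false_or]
        at hxw
      exact eq_zero_of_pow_eq_zero hxw
    simp [this, zero_pow hk0.ne'] at hx
  obtain ⟨lam, rfl⟩ : ∃ lam, a = -(b * lam) := ⟨-a / b, by field_simp⟩
  have hk : (k : ℝ) ≠ 0 := by exact_mod_cast hk0.ne'
  unfold qformGrad at hw
  exact ⟨lam, fun w => mul_left_cancel₀ (mul_ne_zero hb hk) (by linear_combination -(hw w))⟩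

theorem lamMin_le_qform (G : UHG V k) (hk : Even k) (hk0 : 0 < k) {y : V → ℝ}
    (hy : ∑ v, y v ^ k = 1) : G.lamMin ≤ G.Qform y := by
  have hQ : Continuous G.Qform := by unfold Qform; fun_prop
  obtain ⟨x, hx, hmin⟩ :=
    (isCompact_sum_pow_eq_one hk hk0.ne').exists_isMinOn ⟨y, hy⟩ hQ.continuousOn
  obtain ⟨lam, hlam⟩ := G.exists_eigenEq_of_isMinOn hk0 hx hmin
  have hx0 : x ≠ 0 := by rintro rfl; simp [zero_pow hk0.ne'] at hx
  calc G.lamMin ≤ lam := G.lamMin_le_of_eigenEq hx0 hlam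
    _ = G.Qform x := by simpa [hx.out] using hlam.mul_sum_pow hk0
    _ ≤ G.Qform y := hmin hy

theorem qform_smul (G : UHG V k) (c : ℝ) (x : V → ℝ) :
    G.Qform (c • x) = c ^ k * G.Qform x := by
  unfold Qform
  rw [mul_sum]
  refine sum_congr rfl fun e he => ?_
  simp only [Pi.smul_apply, smul_eq_mul, mul_pow, prod_mul_distrib, prod_const, G.uniform e he,
    ← mul_sum]
  ring

theorem lamMin_le_qform_div (G : UHG V k) (hk : Even k) (hk0 : 0 < k) {y : V → ℝ}
    (hy : 0 < ∑ v, y v ^ k) : G.lamMin ≤ G.Qform y / ∑ v, y v ^ k := by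
  set s := ∑ v, y v ^ k
  have hc : (s ^ (-1 / k : ℝ)) ^ k = s⁻¹ := by
    rw [← Real.rpow_natCast, ← Real.rpow_mul hy.le,
      div_mul_cancel₀ _ (by exact_mod_cast hk0.ne'), Real.rpow_neg_one]
  have := G.lamMin_le_qform hk hk0 (y := s ^ (-1 / k : ℝ) • y)
    (by simp only [Pi.smul_apply, smul_eq_mul, mul_pow, ← mul_sum, hc]
        exact inv_mul_cancel₀ hy.ne')
  rwa [qform_smul, hc, inv_mul_eq_div] at this

theorem qform_eq_add_of_edges_eq_union {G G₀ H : UHG V k} (h : G.edges = G₀.edges ∪ H.edges)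
    (hd : Disjoint G₀.edges H.edges) (x : V → ℝ) : G.Qform x = G₀.Qform x + H.Qform x := by
  unfold Qform
  rw [h, sum_union hd]

theorem qform_eq_deg_mul_pow (G : UHG V k) (hk : 2 ≤ k) {u : V} {x : V → ℝ}
    (hx : ∀ v ∈ G.verts, v ≠ u → x v = 0) : G.Qform x = G.deg u * x u ^ k := by
  have hedge : ∀ e ∈ G.edges,
      ∑ v ∈ e, x v ^ k + k * ∏ v ∈ e, x v = if u ∈ e then x u ^ k else 0 := by
    intro e he
    have hxe : ∀ v ∈ e, v ≠ u → x v = 0 := fun v hv => hx v (mem_biUnion.2 ⟨e, he, hv⟩)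
    obtain ⟨w, hw, hwu⟩ := exists_mem_ne (by rw [G.uniform e he]; omega : 1 < e.card) u
    rw [prod_eq_zero hw (hxe w hw hwu), mul_zero, add_zero, ← sum_ite_eq' e u (x · ^ k)]
    refine sum_congr rfl fun v hv => ?_
    split_ifs with hvu
    · rw [hvu]
    · rw [hxe v hv hvu, zero_pow (by omega)]
  rw [Qform, sum_congr rfl hedge, ← sum_filter, sum_const, nsmul_eq_mul]
  rfl

theorem qform_eq_zero_of_odd_card_inter (G : UHG V k) (hk : Even k) {U : Finset V}
    (hU : ∀ e ∈ G.edges, Odd (e ∩ U).card) {x : V → ℝ}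
    (hx : ∀ v ∈ G.verts, x v = if v ∈ U then 1 else -1) : G.Qform x = 0 := by
  refine sum_eq_zero fun e he => ?_
  have hxe : ∀ v ∈ e, x v = if v ∈ U then 1 else -1 := fun v hv =>
    hx v (mem_biUnion.2 ⟨e, he, hv⟩)
  have hodd : Odd (e \ U).card := by
    have hcard := card_sdiff_add_card_inter e U
    obtain ⟨m, hm⟩ := hU e he
    obtain ⟨n, hn⟩ := hk
    exact ⟨n - m - 1, by rw [G.uniform e he] at hcard; omega⟩
  have hpow : ∑ v ∈ e, x v ^ k = k := by
    rw [sum_congr rfl fun v hv => by rw [hxe v hv, apply_ite (· ^ k), one_pow, hk.neg_one_pow,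
      ite_self], sum_const, G.uniform e he, nsmul_one]
  have hprod : ∏ v ∈ e, x v = -1 := by
    rw [prod_congr rfl hxe, prod_ite, prod_const_one, one_mul, prod_const,
      filter_notMem_eq_sdiff, hodd.neg_one_pow]
  rw [hpow, hprod]
  ring

end UHG

theorem stmt16_general {V : Type} [DecidableEq V] [Fintype V] {k : ℕ}
    (hk : Even k) (hk0 : 0 < k) (G G₀ H : UHG V k) (u : V)
    (hcoal : UHG.IsCoalescence G G₀ H u) (hH : H.OddBipartite) :
    G.lamMin ≤ (G₀.deg u : ℝ) / H.verts.card := by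
  obtain ⟨hedges, hdisj, hinter, -, huH⟩ := hcoal
  obtain ⟨U, hU⟩ := hH
  set y : V → ℝ := fun v => if v ∈ H.verts then (if v ∈ U then 1 else -1) else 0
  have hyk : ∀ v, y v ^ k = if v ∈ H.verts then 1 else 0 := fun v => by
    simp only [y, apply_ite (· ^ k), one_pow, hk.neg_one_pow, ite_self, zero_pow hk0.ne']
  have hsum : ∑ v, y v ^ k = H.verts.card := by
    simp only [hyk, sum_boole, filter_univ_mem]
  have hQ : G.Qform y = G₀.deg u := by
    have hG₀ : ∀ v ∈ G₀.verts, v ≠ u → y v = 0 := fun v hv hvu =>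
      if_neg fun hvH => hvu (mem_singleton.1 (hinter (mem_inter.2 ⟨hv, hvH⟩)))
    rw [UHG.qform_eq_add_of_edges_eq_union hedges hdisj,
      G₀.qform_eq_deg_mul_pow (by obtain ⟨n, rfl⟩ := hk; omega) hG₀,
      H.qform_eq_zero_of_odd_card_inter hk hU fun v hv => if_pos hv, hyk, if_pos huH]
    ring
  have hpos : (0 : ℝ) < ∑ v, y v ^ k := hsum ▸ Nat.cast_pos.2 (card_pos.2 ⟨u, huH⟩)
  simpa only [hQ, hsum] using G.lamMin_le_qform_div hk hk0 hpos

/-- Let `G = G₀(u) ⋄ H(u)` be a connected non-odd-bipartite `k`-uniform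
hypergraph (`k` even) with `H` odd-bipartite. Then `λ_min(G) ≤ d_{G₀}(u) / ν(H)`. -/
theorem stmt16 {V : Type} [DecidableEq V] [Fintype V] {k : ℕ}
    (hk : Even k) (hk0 : 0 < k) (G G₀ H : UHG V k) (u : V)
    (hcoal : UHG.IsCoalescence G G₀ H u) (hH : H.OddBipartite)
    (hconn : G.Connected) (hnob : ¬ G.OddBipartite) :
    G.lamMin ≤ (G₀.deg u : ℝ) / H.verts.card :=
  stmt16_general hk hk0 G G₀ H u hcoal hH
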